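/- Let R be a complete local ring with maximal ideal m and let A be a commutative Frobenius algebra over R (with counit μ : A → R) that is free as an R-module. If A/mA is a semisimple Frobenius algebra over R/m, then A is semisimple over R; that is, A is isomorphic as a Frobenius algebra to a direct sum R_{λ₁} ⊕ ⋯ ⊕ R_{λₙ} for some invertible λᵢ ∈ R. -/

import Mathlib

/-!
Since `A` is free of finite rank over the `𝔪`-adically complete ring `R`, it is complete for the
ideal `𝔪A`, so each idempotent `eᵢ` of `A/𝔪A` lifts to an idempotent `vᵢ` of `A` by Newton's
iteration for `x² - x`. The lifts stay orthogonal, because an idempotent lying in `𝔪A` lies in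
every `𝔪ⁿA` and hence vanishes. By Nakayama's lemma the `vᵢ` span `A`, and since their number is
the rank of `A` they form a basis. Finally `μ(vᵢ) ≡ μ(eᵢ)` modulo `𝔪`, so `μ(vᵢ)` is a unit.
-/

open TensorProduct

section AdicComplete

variable {R : Type*} [CommRing R] (I : Ideal R)

theorem IsAdicComplete.of_linearEquiv {M N : Type*} [AddCommGroup M] [Module R M]
    [AddCommGroup N] [Module R N] [IsAdicComplete I M] (f : M ≃ₗ[R] N) :
    IsAdicComplete I N := by
  rw [← AdicCompletion.of_bijective_iff]
  have hcomm : AdicCompletion.congr I f ∘ AdicCompletion.of I M = AdicCompletion.of I N ∘ f :=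
    rfl
  have := (AdicCompletion.congr I f).bijective.comp (AdicCompletion.of_bijective I M)
  rw [hcomm] at this
  exact (Function.Bijective.of_comp_iff _ f.bijective).mp this

instance IsAdicComplete.pi {ι : Type*} [Finite ι] (M : ι → Type*) [∀ i, AddCommGroup (M i)]
    [∀ i, Module R (M i)] [∀ i, IsAdicComplete I (M i)] : IsAdicComplete I (∀ i, M i) := by
  classical
  have := Fintype.ofFinite ι
  rw [← AdicCompletion.of_bijective_iff]
  have hcomm : AdicCompletion.piEquivOfFintype I M ∘ AdicCompletion.of I (∀ i, M i) =
      Pi.map fun i ↦ AdicCompletion.of I (M i) := by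
    ext x i; simp
  have := Function.Bijective.piMap fun i ↦ AdicCompletion.of_bijective I (M i)
  rw [← hcomm] at this
  exact (Function.Bijective.of_comp_iff' (AdicCompletion.piEquivOfFintype I M).bijective _).mp
    this

variable {I}

theorem IsAdicComplete.of_basis {ι M : Type*} [Finite ι] [AddCommGroup M] [Module R M]
    [IsAdicComplete I R] (b : Module.Basis ι R M) : IsAdicComplete I M :=
  .of_linearEquiv I b.equivFun.symm

theorem IsPrecomplete.exists_sub_mem_of_succ_sub_mem {M : Type*} [AddCommGroup M] [Module R M]
    [IsPrecomplete I M] {f : ℕ → M}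
    (hf : ∀ n, f (n + 1) - f n ∈ (I ^ n • ⊤ : Submodule R M)) :
    ∃ L, ∀ n, f n - L ∈ (I ^ n • ⊤ : Submodule R M) := by
  have hcauchy : ∀ {m n}, m ≤ n → f m ≡ f n [SMOD (I ^ m • ⊤ : Submodule R M)] := by
    intro m n hmn
    induction n, hmn using Nat.le_induction with
    | base => rfl
    | succ n hmn ih =>
      refine ih.trans ?_
      rw [SModEq.sub_mem, ← neg_sub, neg_mem_iff]
      exact Submodule.smul_mono_left (Ideal.pow_le_pow_right hmn) (hf n)
  obtain ⟨L, hL⟩ := IsPrecomplete.prec ‹_› hcauchy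
  exact ⟨L, fun n ↦ SModEq.sub_mem.mp (hL n)⟩

end AdicComplete

section IdempotentLifting

variable {S : Type*} [CommRing S] {J : Ideal S}

theorem IsHausdorff.eq_zero_of_forall_mem_pow [IsHausdorff J S] {x : S}
    (hx : ∀ n, x ∈ J ^ n) : x = 0 :=
  IsHausdorff.haus (I := J) ‹_› x fun n ↦ by simpa [SModEq.zero] using hx n

theorem IsIdempotentElem.eq_zero_of_mem [IsHausdorff J S] {x : S} (hx : IsIdempotentElem x)
    (hJ : x ∈ J) : x = 0 := by
  refine IsHausdorff.eq_zero_of_forall_mem_pow (J := J) fun n ↦ ?_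
  cases n with
  | zero => simp
  | succ n => simpa [hx.pow_succ_eq] using Ideal.pow_mem_pow hJ (n + 1)

theorem exists_isIdempotentElem_sub_mem [IsAdicComplete J S] {e : S} (he : e * e - e ∈ J) :
    ∃ v, IsIdempotentElem v ∧ v - e ∈ J := by
  -- Newton's iteration for `x² - x`; each step squares the defect `x² - x` up to a factor.
  set x : ℕ → S := fun n ↦ (fun y ↦ 3 * y ^ 2 - 2 * y ^ 3)^[n] e with hx
  have hx_succ (n : ℕ) : x (n + 1) = 3 * x n ^ 2 - 2 * x n ^ 3 :=
    Function.iterate_succ_apply' _ n e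
  have hdefect (n : ℕ) : x n * x n - x n ∈ J ^ (n + 1) := by
    induction n with
    | zero => simpa [hx] using he
    | succ n ih =>
      have h : x (n + 1) * x (n + 1) - x (n + 1) =
          (4 * x n ^ 2 - 4 * x n - 3) * ((x n * x n - x n) * (x n * x n - x n)) := by
        rw [hx_succ]; ring
      rw [h]
      have hsq : (x n * x n - x n) * (x n * x n - x n) ∈ J ^ ((n + 1) + (n + 1)) := by
        rw [pow_add]; exact Ideal.mul_mem_mul ih ih
      exact Ideal.mul_mem_left _ _ (Ideal.pow_le_pow_right (by omega) hsq)
  have hstep (n : ℕ) : x (n + 1) - x n ∈ J ^ (n + 1) := by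
    have h : x (n + 1) - x n = (1 - 2 * x n) * (x n * x n - x n) := by rw [hx_succ]; ring
    rw [h]
    exact Ideal.mul_mem_left _ _ (hdefect n)
  obtain ⟨L, hL⟩ := IsPrecomplete.exists_sub_mem_of_succ_sub_mem (I := J) (M := S) (f := x)
    (fun n ↦ by simpa using Ideal.pow_le_pow_right n.le_succ (hstep n))
  simp only [Ideal.mul_top, smul_eq_mul] at hL
  refine ⟨L, ?_, ?_⟩
  · rw [IsIdempotentElem, ← sub_eq_zero]
    refine IsHausdorff.eq_zero_of_forall_mem_pow (J := J) fun n ↦ ?_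
    have h : L * L - L = (x n * x n - x n) - (L + x n - 1) * (x n - L) := by ring
    rw [h]
    exact sub_mem (Ideal.pow_le_pow_right n.le_succ (hdefect n)) (Ideal.mul_mem_left _ _ (hL n))
  · have h : L - e = (x 1 - x 0) - (x 1 - L) := by rw [show x 0 = e from rfl]; ring
    rw [h]
    simpa using sub_mem (hstep 0) (hL 1)

end IdempotentLifting

section ResidueBasis

variable {R M : Type*} [CommRing R] [AddCommGroup M] [Module R M]

noncomputable def Module.Basis.quotientSMulTop {ι : Type*} (b : Module.Basis ι R M)
    (I : Ideal R) :
    Module.Basis ι (R ⧸ I) (M ⧸ I • (⊤ : Submodule R M)) :=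
  (Algebra.TensorProduct.basis (R ⧸ I) b).map
    ((quotTensorEquivQuotSMul M I).extendScalarsOfSurjective Ideal.Quotient.mk_surjective)

theorem Module.Free.nonempty_basis_of_basis_quotient {ι : Type*} {I : Ideal R}
    [Nontrivial (R ⧸ I)] [Module.Free R M]
    (bq : Module.Basis ι (R ⧸ I) (M ⧸ I • (⊤ : Submodule R M))) :
    Nonempty (Module.Basis ι R M) :=
  let b := Module.Free.chooseBasis R M
  ⟨b.reindex ((b.quotientSMulTop I).indexEquiv bq)⟩

theorem IsLocalRing.span_range_eq_top_of_basis_quotient [IsLocalRing R] [Module.Finite R M]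
    {ι : Type*} {v : ι → M}
    (bq : Module.Basis ι (R ⧸ IsLocalRing.maximalIdeal R)
      (M ⧸ IsLocalRing.maximalIdeal R • (⊤ : Submodule R M)))
    (hv : ∀ i, bq i = Submodule.Quotient.mk (v i)) :
    Submodule.span R (Set.range v) = ⊤ := by
  rw [← IsLocalRing.map_mkQ_eq_top, Submodule.map_span, ← Set.range_comp,
    show (Submodule.mkQ _ ∘ v) = bq from funext fun i ↦ (hv i).symm,
    ← Submodule.restrictScalars_span R _
      (Ideal.Quotient.mk_surjective (I := IsLocalRing.maximalIdeal R)),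
    bq.span_eq, Submodule.restrictScalars_top]

end ResidueBasis

theorem frobenius_semisimple_of_residue_semisimple_general
    {R A : Type*} [CommRing R] [IsLocalRing R]
    [IsAdicComplete (IsLocalRing.maximalIdeal R) R]
    [CommRing A] [Algebra R A] [Module.Free R A]
    (μ : A →ₗ[R] R)
    {n : ℕ} (e : Fin n → A)
    (hid : ∀ i, e i * e i - e i ∈ (IsLocalRing.maximalIdeal R) • (⊤ : Submodule R A))
    (horth : ∀ i j, i ≠ j → e i * e j ∈ (IsLocalRing.maximalIdeal R) • (⊤ : Submodule R A))
    (hbasis : ∃ bq : Module.Basis (Fin n) (R ⧸ IsLocalRing.maximalIdeal R)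
        (A ⧸ ((IsLocalRing.maximalIdeal R) • (⊤ : Submodule R A))),
      ∀ i, bq i = Submodule.Quotient.mk (e i))
    (hμunit : ∀ i, μ (e i) ∉ IsLocalRing.maximalIdeal R) :
    ∃ v : Fin n → A,
      (∃ bA : Module.Basis (Fin n) R A, ∀ i, bA i = v i) ∧
      (∀ i, v i * v i = v i) ∧
      (∀ i j, i ≠ j → v i * v j = 0) ∧
      (∀ i, IsUnit (μ (v i))) := by
  obtain ⟨bq, hbq⟩ := hbasis
  let J := (IsLocalRing.maximalIdeal R).map (algebraMap R A)
  have hmemJ {x : A} : x ∈ IsLocalRing.maximalIdeal R • (⊤ : Submodule R A) ↔ x ∈ J := by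
    rw [Ideal.smul_top_eq_map]; rfl
  obtain ⟨b⟩ := Module.Free.nonempty_basis_of_basis_quotient bq
  have := Module.Finite.of_basis b
  have : IsAdicComplete J A := (IsAdicComplete.map_algebraMap_iff _ _).mpr (.of_basis b)
  choose v hv_idem hv_sub using fun i ↦ exists_isIdempotentElem_sub_mem (hmemJ.mp (hid i))
  have hv_sub' (i : Fin n) : v i - e i ∈ IsLocalRing.maximalIdeal R • (⊤ : Submodule R A) :=
    hmemJ.mpr (hv_sub i)
  have hspan : Submodule.span R (Set.range v) = ⊤ :=
    IsLocalRing.span_range_eq_top_of_basis_quotient bq fun i ↦ by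
      rw [hbq, Submodule.Quotient.eq, ← neg_mem_iff, neg_sub]
      exact hv_sub' i
  have hcard : Fintype.card (Fin n) = Module.finrank R A := by
    simp [Module.finrank_eq_card_basis b]
  refine ⟨v, ⟨basisOfTopLeSpanOfCardEqFinrank v hspan.ge hcard, fun i ↦ by simp⟩, hv_idem,
    fun i j hij ↦ ?_, fun i ↦ ?_⟩
  · refine ((hv_idem i).mul (hv_idem j)).eq_zero_of_mem (J := J) ?_
    rw [← Ideal.Quotient.eq_zero_iff_mem, map_mul, Ideal.Quotient.eq.mpr (hv_sub i),
      Ideal.Quotient.eq.mpr (hv_sub j), ← map_mul, Ideal.Quotient.eq_zero_iff_mem]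
    exact hmemJ.mp (horth i j hij)
  · have hμ : μ (v i) - μ (e i) ∈ IsLocalRing.maximalIdeal R := by
      simpa using Submodule.smul_top_le_comap_smul_top _ μ (hv_sub' i)
    rw [← IsLocalRing.notMem_maximalIdeal]
    exact fun hv ↦ hμunit i (by simpa only [sub_sub_cancel] using sub_mem hv hμ)

/-- **Semisimplicity lifts from the residue field.**
Let `R` be a complete local ring with maximal ideal `m`, and let `A` be a commutative
Frobenius algebra over `R` (counit `μ`, comultiplication `Δ` satisfying the Frobenius
relation and counit axiom), free as an `R`-module.  If `A/mA` is semisimple over `R/m`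
— i.e. there are elements `e₁,…,eₙ` of `A` whose images form an orthogonal idempotent
basis of `A/mA` with counit values that are units mod `m` — then `A` is semisimple:
`A ≅ R_{λ₁} ⊕ ⋯ ⊕ R_{λₙ}`, i.e. `A` admits an honest orthogonal idempotent `R`-basis
`v₁,…,vₙ` with each `μ(vᵢ) = λᵢ⁻¹` a unit of `R`. -/
theorem frobenius_semisimple_of_residue_semisimple
    {R A : Type*} [CommRing R] [IsLocalRing R]
    [IsAdicComplete (IsLocalRing.maximalIdeal R) R]
    [CommRing A] [Algebra R A] [Module.Free R A]
    (Δ : A →ₗ[R] A ⊗[R] A) (μ : A →ₗ[R] R)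
    (hcounitR : ∀ a : A, (TensorProduct.rid R A) (TensorProduct.map LinearMap.id μ (Δ a)) = a)
    (hcounitL : ∀ a : A, (TensorProduct.lid R A) (TensorProduct.map μ LinearMap.id (Δ a)) = a)
    (hfrob : ∀ a b : A, Δ (a * b) = TensorProduct.map (LinearMap.mul' R A) LinearMap.id
      ((TensorProduct.assoc R A A A).symm (a ⊗ₜ[R] Δ b)))
    {n : ℕ} (e : Fin n → A)
    (hid : ∀ i, e i * e i - e i ∈ (IsLocalRing.maximalIdeal R) • (⊤ : Submodule R A))
    (horth : ∀ i j, i ≠ j → e i * e j ∈ (IsLocalRing.maximalIdeal R) • (⊤ : Submodule R A))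
    (hbasis : ∃ bq : Module.Basis (Fin n) (R ⧸ IsLocalRing.maximalIdeal R)
        (A ⧸ ((IsLocalRing.maximalIdeal R) • (⊤ : Submodule R A))),
      ∀ i, bq i = Submodule.Quotient.mk (e i))
    (hμunit : ∀ i, μ (e i) ∉ IsLocalRing.maximalIdeal R) :
    ∃ v : Fin n → A,
      (∃ bA : Module.Basis (Fin n) R A, ∀ i, bA i = v i) ∧
      (∀ i, v i * v i = v i) ∧
      (∀ i j, i ≠ j → v i * v j = 0) ∧
      (∀ i, IsUnit (μ (v i))) :=
  frobenius_semisimple_of_residue_semisimple_general μ e hid horth hbasis hμunit
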